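/- arXiv:2205.01980 — 2 statements merged into one kernel-verified Lean document; each statement's English description precedes it below -/
import Mathlib

section
/- The map α defined by α(S, ξ) := (S⁻¹P_B, R_Sᵀ v_B, b_B, T, (S⁻¹ p_i)) is a right group action of SE_{e₃}(3) on the VI-SLAM total space 𝒯: for every ξ ∈ 𝒯 the point α(S, ξ) again lies in 𝒯, α(Id, ξ) = ξ, and α(S₁S₂, ξ) = α(S₂, α(S₁, ξ)) for all S₁, S₂ ∈ SE_{e₃}(3) and ξ ∈ 𝒯. -/
noncomputable section
open Matrix

/-! Basic setup: rotations, rigid-body transformations, and the VI-SLAM total space. -/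

abbrev Mat3 := Matrix (Fin 3) (Fin 3) ℝ
abbrev Vec3 := EuclideanSpace ℝ (Fin 3)
abbrev Vec6 := EuclideanSpace ℝ (Fin 6)

/-- Membership in `SO(3)`. -/
def SO3 (R : Mat3) : Prop := Rᵀ * R = 1 ∧ R.det = 1

/-- The standard gravity direction `e₃ = (0,0,1)`. -/
def e3 : Vec3 := WithLp.toLp 2 ![0, 0, 1]

/-- Matrix-vector multiplication on `ℝ³`. -/
def mulv (M : Mat3) (v : Vec3) : Vec3 := WithLp.toLp 2 (M.mulVec v)

/-- `SE(3)` elements as (rotation, translation) pairs `(R_P, x_P)`. -/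
abbrev SE3 := Mat3 × Vec3

def SE3.mul (P Q : SE3) : SE3 := (P.1 * Q.1, P.2 + mulv P.1 Q.2)
def SE3.one : SE3 := (1, 0)
def SE3.inv (P : SE3) : SE3 := (P.1ᵀ, -(mulv P.1ᵀ P.2))
/-- The action of `SE(3)` on `ℝ³`: `P p = R_P p + x_P`. -/
def SE3.act (P : SE3) (p : Vec3) : Vec3 := mulv P.1 p + P.2

/-- Membership in the subgroup `SE_{e₃}(3) = {(R,x) ∈ SE(3) | R e₃ = e₃}`. -/
def SEe3 (S : SE3) : Prop := SO3 S.1 ∧ mulv S.1 e3 = e3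

/-- A point of the ambient VI-SLAM state space with `n` landmarks. -/
structure VIState (n : ℕ) where
  P : SE3            -- pose of the IMU: `(R_B, x_B)`
  v : Vec3           -- linear velocity `v_B`
  b : Vec6           -- IMU bias `b_B`
  T : SE3            -- camera extrinsics
  p : Fin n → Vec3   -- landmark positions

/-- Membership in the VI-SLAM total space `𝒯`: the rotation components lie in `SO(3)` and
no landmark coincides with the camera centre, i.e. `(P_B T)⁻¹ p_i ≠ 0` for all `i`. -/
def VIState.mem {n : ℕ} (ξ : VIState n) : Prop :=
  SO3 ξ.P.1 ∧ SO3 ξ.T.1 ∧ ∀ i, SE3.act (SE3.inv (SE3.mul ξ.P ξ.T)) (ξ.p i) ≠ 0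

/-- The reference-frame action `α(S, ξ) := (S⁻¹P_B, R_Sᵀ v_B, b_B, T, (S⁻¹ p_i))`. -/
def alphaAct {n : ℕ} (S : SE3) (ξ : VIState n) : VIState n :=
  ⟨SE3.mul (SE3.inv S) ξ.P, mulv S.1ᵀ ξ.v, ξ.b, ξ.T,
    fun i => SE3.act (SE3.inv S) (ξ.p i)⟩

/-! `α(S, ·)` is left multiplication by `S⁻¹` on the poses and on the landmarks, so the action laws
reduce to associativity of `SE(3)` and `(S₁S₂)⁻¹ = S₂⁻¹S₁⁻¹`. Membership in `𝒯` is preserved because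
the frame change moves the pose and the landmarks together:
`(S⁻¹P_B T)⁻¹ (S⁻¹p_i) = (P_B T)⁻¹ S S⁻¹ p_i = (P_B T)⁻¹ p_i`. -/

lemma mulv_mulv (A B : Mat3) (v : Vec3) : mulv A (mulv B v) = mulv (A * B) v :=
  congrArg (WithLp.toLp 2) (Matrix.mulVec_mulVec _ A B)

lemma mulv_one (v : Vec3) : mulv 1 v = v := by
  simp [mulv]

lemma mulv_zero (A : Mat3) : mulv A 0 = 0 := by
  simp [mulv]

lemma mulv_add (A : Mat3) (v w : Vec3) : mulv A (v + w) = mulv A v + mulv A w := by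
  simp [mulv, Matrix.mulVec_add]

lemma mulv_neg (A : Mat3) (v : Vec3) : mulv A (-v) = -mulv A v := by
  simp [mulv, Matrix.mulVec_neg]

lemma SO3.mul {A B : Mat3} (hA : SO3 A) (hB : SO3 B) : SO3 (A * B) := by
  refine ⟨?_, by rw [Matrix.det_mul, hA.2, hB.2, one_mul]⟩
  rw [Matrix.transpose_mul, mul_assoc, ← mul_assoc Aᵀ, hA.1, one_mul, hB.1]

lemma SO3.mul_transpose {A : Mat3} (hA : SO3 A) : A * Aᵀ = 1 :=
  mul_eq_one_comm.mp hA.1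

lemma SO3.transpose {A : Mat3} (hA : SO3 A) : SO3 Aᵀ :=
  ⟨by rw [Matrix.transpose_transpose, hA.mul_transpose], by rw [Matrix.det_transpose, hA.2]⟩

namespace SE3

lemma one_mul (P : SE3) : SE3.mul SE3.one P = P := by
  simp [SE3.mul, SE3.one, mulv_one]

lemma inv_one : SE3.inv SE3.one = SE3.one := by
  simp [SE3.inv, SE3.one, mulv_zero]

lemma one_act (p : Vec3) : SE3.act SE3.one p = p := by
  simp [SE3.act, SE3.one, mulv_one]

lemma mul_assoc (P Q R : SE3) : SE3.mul (SE3.mul P Q) R = SE3.mul P (SE3.mul Q R) := by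
  simp only [SE3.mul, _root_.mul_assoc, mulv_add, mulv_mulv, add_assoc]

lemma mul_act (P Q : SE3) (p : Vec3) : SE3.act (SE3.mul P Q) p = SE3.act P (SE3.act Q p) := by
  simp only [SE3.act, SE3.mul, mulv_add, mulv_mulv]
  abel

lemma inv_mul {P : SE3} (hP : P.1ᵀ * P.1 = 1) (Q : SE3) :
    SE3.inv (SE3.mul P Q) = SE3.mul (SE3.inv Q) (SE3.inv P) := by
  refine Prod.ext (Matrix.transpose_mul _ _) ?_
  simp only [SE3.inv, SE3.mul, Matrix.transpose_mul, mulv_add, mulv_neg, mulv_mulv,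
    _root_.mul_assoc, hP, _root_.mul_one]
  abel

lemma inv_inv {P : SE3} (hP : P.1 * P.1ᵀ = 1) : SE3.inv (SE3.inv P) = P := by
  refine Prod.ext (Matrix.transpose_transpose _) ?_
  simp only [SE3.inv, Matrix.transpose_transpose, mulv_neg, neg_neg, mulv_mulv, hP, mulv_one]

lemma act_inv_act {P : SE3} (hP : P.1 * P.1ᵀ = 1) (p : Vec3) :
    SE3.act P (SE3.act (SE3.inv P) p) = p := by
  simp only [SE3.act, SE3.inv, mulv_add, mulv_neg, mulv_mulv, hP, mulv_one]
  abel

lemma act_inv_inv_mul_act_inv {S : SE3} (hS : S.1 * S.1ᵀ = 1) (Q : SE3) (p : Vec3) :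
    SE3.act (SE3.inv (SE3.mul (SE3.inv S) Q)) (SE3.act (SE3.inv S) p) = SE3.act (SE3.inv Q) p := by
  have hSinv : (SE3.inv S).1ᵀ * (SE3.inv S).1 = 1 := by
    rwa [SE3.inv, Matrix.transpose_transpose]
  rw [inv_mul hSinv, mul_act, inv_inv hS, act_inv_act hS]

end SE3

section alphaAct

variable {n : ℕ}

lemma VIState.mem_alphaAct {S : SE3} (hS : SO3 S.1) {ξ : VIState n} (hξ : ξ.mem) :
    (alphaAct S ξ).mem := by
  obtain ⟨hP, hT, hp⟩ := hξ
  refine ⟨hS.transpose.mul hP, hT, fun i => ?_⟩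
  change SE3.act (SE3.inv (SE3.mul (SE3.mul (SE3.inv S) ξ.P) ξ.T))
    (SE3.act (SE3.inv S) (ξ.p i)) ≠ 0
  rw [SE3.mul_assoc, SE3.act_inv_inv_mul_act_inv hS.mul_transpose]
  exact hp i

lemma alphaAct_one (ξ : VIState n) : alphaAct SE3.one ξ = ξ := by
  have hR : SE3.one.1ᵀ = 1 := Matrix.transpose_one
  simp only [alphaAct, SE3.inv_one, SE3.one_mul, SE3.one_act, hR, mulv_one]

lemma alphaAct_mul {S₁ : SE3} (hS₁ : S₁.1ᵀ * S₁.1 = 1) (S₂ : SE3) (ξ : VIState n) :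
    alphaAct (SE3.mul S₁ S₂) ξ = alphaAct S₂ (alphaAct S₁ ξ) := by
  have hR : (SE3.mul S₁ S₂).1ᵀ = S₂.1ᵀ * S₁.1ᵀ := Matrix.transpose_mul _ _
  simp only [alphaAct, SE3.inv_mul hS₁, SE3.mul_assoc, SE3.mul_act, hR, mulv_mulv]

end alphaAct

theorem alpha_is_right_group_action_general (n : ℕ) :
    (∀ (S : SE3) (ξ : VIState n), SEe3 S → ξ.mem → (alphaAct S ξ).mem) ∧
    (∀ ξ : VIState n, ξ.mem → alphaAct SE3.one ξ = ξ) ∧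
    (∀ (S₁ S₂ : SE3) (ξ : VIState n), SEe3 S₁ → SEe3 S₂ → ξ.mem →
      alphaAct (SE3.mul S₁ S₂) ξ = alphaAct S₂ (alphaAct S₁ ξ)) :=
  ⟨fun _ _ hS hξ => VIState.mem_alphaAct hS.1 hξ,
    fun ξ _ => alphaAct_one ξ,
    fun _ S₂ ξ hS₁ _ _ => alphaAct_mul hS₁.1.1 S₂ ξ⟩

/-- `α` is a right group action of `SE_{e₃}(3)` on the VI-SLAM total
space `𝒯`: it maps `𝒯` to `𝒯`, the identity acts trivially, and
`α(S₁S₂, ξ) = α(S₂, α(S₁, ξ))`. -/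
theorem alpha_is_right_group_action (n : ℕ) (hn : 1 ≤ n) :
    (∀ (S : SE3) (ξ : VIState n), SEe3 S → ξ.mem → (alphaAct S ξ).mem) ∧
    (∀ ξ : VIState n, ξ.mem → alphaAct SE3.one ξ = ξ) ∧
    (∀ (S₁ S₂ : SE3) (ξ : VIState n), SEe3 S₁ → SEe3 S₂ → ξ.mem →
      alphaAct (SE3.mul S₁ S₂) ξ = alphaAct S₂ (alphaAct S₁ ξ)) :=
  alpha_is_right_group_action_general n
end
end

section
/- The polar parametrisation of visual landmarks is inverted by the SOT(3) exponential: let q ∈ ℝ³ with q ≠ 0 and e₃ × q ≠ 0, and set θ := arccos(e₃ᵀ q / |q|), Ω := −θ · (e₃ × q)/|e₃ × q|, and s := −log|q|. Then exp(−Ω^×) e₃ = q/|q| and e^{−s} exp(Ω^×)ᵀ e₃ = q; i.e. the SOT(3) element exp_{SOT(3)}((Ω, s)^∧) = (exp(Ω^×), e^s) satisfies exp_{SOT(3)}((Ω, s)^∧)⁻¹ e₃ = q under the SOT(3) action Q p := c_Q R_Q p. -/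
/-! The axis `a = (e₃ × q)/|e₃ × q|` is a unit vector orthogonal to `e₃`, so `(a^×)³ = -a^×` and
Rodrigues' formula gives `exp(θ a^×) e₃ = cos θ e₃ + sin θ (a × e₃)`. Lagrange's identity
`|e₃ × q|² = |q|² - (e₃ᵀ q)²` yields `cos θ = e₃ᵀ q/|q|` and `sin θ = |e₃ × q|/|q|`, while
`a × e₃ = (q - (e₃ᵀ q) e₃)/|e₃ × q|`; together the rotated vector is `q/|q|`. The other two claims
follow from `exp(Ω^×)ᵀ = exp(-Ω^×)` and `e^{-s} = |q|`. -/

noncomputable section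
open Matrix

/-- The cross product on `ℝ³`. -/
def crossV (u v : Vec3) : Vec3 := WithLp.toLp 2 (crossProduct u v)

/-- The skew-symmetric matrix `ω^×` satisfying `ω^× u = ω × u`. -/
def skew (ω : Vec3) : Mat3 := !![0, -ω 2, ω 1; ω 2, 0, -ω 0; -ω 1, ω 0, 0]

/-- `SOT(3)` elements as pairs `(R_Q, c_Q)`. -/
abbrev SOT3 := Mat3 × ℝ
def SOT3.inv (Q : SOT3) : SOT3 := (Q.1ᵀ, Q.2⁻¹)
/-- The action of `SOT(3)` on `ℝ³`: `Q p := c_Q R_Q p`. -/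
def SOT3.act (Q : SOT3) (p : Vec3) : Vec3 := Q.2 • mulv Q.1 p

open scoped Nat

section Rodrigues

variable {A : Type*} [Ring A] [Algebra ℝ A] {K : A}

lemma pow_two_mul_add_one_of_mul_mul_eq_neg (hK : K * K * K = -K) (m : ℕ) :
    K ^ (2 * m + 1) = ((-1 : ℝ) ^ m) • K := by
  induction m with
  | zero => simp
  | succ m ih =>
    rw [show 2 * (m + 1) + 1 = 2 * m + 1 + 2 by ring, pow_add, ih, sq, smul_mul_assoc,
      ← mul_assoc, hK, pow_succ, mul_neg_one, neg_smul, smul_neg]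

lemma pow_two_mul_add_two_of_mul_mul_eq_neg (hK : K * K * K = -K) (m : ℕ) :
    K ^ (2 * m + 2) = ((-1 : ℝ) ^ m) • (K * K) := by
  rw [pow_succ, pow_two_mul_add_one_of_mul_mul_eq_neg hK, smul_mul_assoc]

variable [TopologicalSpace A] [IsTopologicalRing A] [ContinuousSMul ℝ A] [T2Space A]

/-- Rodrigues' formula: `K³ = -K` makes the odd and even parts of the exponential series
the series of `sin` and of `1 - cos`. -/
theorem exp_smul_of_mul_mul_eq_neg (hK : K * K * K = -K) (t : ℝ) :
    NormedSpace.exp (t • K) = 1 + Real.sin t • K + (1 - Real.cos t) • (K * K) := by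
  obtain ⟨f, hf⟩ : ∃ f : ℕ → A, ∀ n, f n = (t ^ n / n !) • K ^ n := ⟨_, fun _ => rfl⟩
  have hodd : HasSum (fun k => f (2 * k + 1)) (Real.sin t • K) := by
    convert (Real.hasSum_sin t).smul_const K using 2 with k
    rw [hf, pow_two_mul_add_one_of_mul_mul_eq_neg hK, smul_smul]
    ring_nf
  have heven : HasSum (fun k => f (2 * k + 1 + 1)) ((1 - Real.cos t) • (K * K)) := by
    have hcos := (hasSum_nat_add_iff' 1).mpr (Real.hasSum_cos t)
    convert hcos.neg.smul_const (K * K) using 2 with k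
    · rw [hf, pow_two_mul_add_two_of_mul_mul_eq_neg hK, smul_smul]
      ring_nf
    · simp
  have hsum : HasSum f (1 + Real.sin t • K + (1 - Real.cos t) • (K * K)) := by
    have := (hasSum_nat_add_iff 1).mp (hodd.even_add_odd (f := fun n => f (n + 1)) heven)
    rwa [Finset.sum_range_one, hf, pow_zero, pow_zero, Nat.factorial_zero, Nat.cast_one,
      div_one, one_smul, add_comm, ← add_assoc] at this
  rw [NormedSpace.exp_eq_tsum ℝ, ← hsum.tsum_eq]
  simp [hf, smul_pow, smul_smul, div_eq_inv_mul]

end Rodrigues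

lemma ofLp_dotProduct_self {ι : Type*} [Fintype ι] (v : EuclideanSpace ℝ ι) :
    v.ofLp ⬝ᵥ v.ofLp = ‖v‖ ^ 2 := by
  rw [EuclideanSpace.real_norm_sq_eq, dotProduct]
  simp only [sq]

lemma skew_mulVec (ω : Vec3) (u : Fin 3 → ℝ) : skew ω *ᵥ u = ω.ofLp ⨯₃ u := by
  ext i
  fin_cases i <;> simp [skew, cross_apply, mulVec, vecHead, vecTail] <;> ring

lemma skew_smul (c : ℝ) (ω : Vec3) : skew (c • ω) = c • skew ω := by
  ext i j
  fin_cases i <;> fin_cases j <;> simp [skew]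

lemma skew_transpose (ω : Vec3) : (skew ω)ᵀ = -skew ω := by
  ext i j
  fin_cases i <;> fin_cases j <;> simp [skew]

lemma skew_mul_skew_mul_skew (ω : Vec3) : skew ω * skew ω * skew ω = -‖ω‖ ^ 2 • skew ω := by
  rw [EuclideanSpace.real_norm_sq_eq, Fin.sum_univ_three]
  ext i j
  fin_cases i <;> fin_cases j <;> simp [skew, Matrix.mul_apply, Fin.sum_univ_three] <;> ring

lemma exp_smul_skew_mulVec_of_orthogonal {a : Vec3} (ha : ‖a‖ = 1) {v : Fin 3 → ℝ}
    (hav : a.ofLp ⬝ᵥ v = 0) (t : ℝ) :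
    NormedSpace.exp (t • skew a) *ᵥ v = Real.cos t • v + Real.sin t • (a.ofLp ⨯₃ v) := by
  have hK : skew a * skew a * skew a = -skew a := by
    rw [skew_mul_skew_mul_skew, ha, one_pow, neg_smul, one_smul]
  have haa : a.ofLp ⬝ᵥ a.ofLp = 1 := by rw [ofLp_dotProduct_self, ha, one_pow]
  rw [exp_smul_of_mul_mul_eq_neg hK, add_mulVec, add_mulVec, one_mulVec, smul_mulVec,
    smul_mulVec, ← mulVec_mulVec, skew_mulVec, skew_mulVec, cross_cross_eq_smul_sub_smul',
    hav, haa]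
  module

lemma cos_arccos_div_of_sq_add_sq {z r n : ℝ} (hn : 0 < n) (h : z ^ 2 + r ^ 2 = n ^ 2) :
    Real.cos (Real.arccos (z / n)) = z / n := by
  obtain ⟨hlo, hhi⟩ := abs_le_of_sq_le_sq' (by nlinarith : z ^ 2 ≤ n ^ 2) hn.le
  apply Real.cos_arccos
  · rwa [le_div_iff₀ hn, neg_one_mul]
  · rwa [div_le_one hn]

lemma sin_arccos_div_of_sq_add_sq {z r n : ℝ} (hn : 0 < n) (hr : 0 ≤ r)
    (h : z ^ 2 + r ^ 2 = n ^ 2) : Real.sin (Real.arccos (z / n)) = r / n := by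
  rw [Real.sin_arccos, ← Real.sqrt_sq (div_nonneg hr hn.le)]
  congr 1
  field_simp
  linarith

lemma e3_dotProduct_self : e3.ofLp ⬝ᵥ e3.ofLp = 1 := by
  simp [e3]

lemma crossV_ne_zero_right {u v : Vec3} (h : crossV u v ≠ 0) : v ≠ 0 := by
  rintro rfl
  simp [crossV] at h

lemma norm_crossV_e3_sq (q : Vec3) : ‖crossV e3 q‖ ^ 2 = ‖q‖ ^ 2 - (e3 ⬝ᵥ q) ^ 2 := by
  rw [← ofLp_dotProduct_self, ← ofLp_dotProduct_self]
  change (e3.ofLp ⨯₃ q.ofLp) ⬝ᵥ (e3.ofLp ⨯₃ q.ofLp) = _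
  rw [cross_dot_cross, e3_dotProduct_self, dotProduct_comm q.ofLp e3.ofLp]
  ring

def polarAxis (q : Vec3) : Vec3 := ‖crossV e3 q‖⁻¹ • crossV e3 q

def polarAngle (q : Vec3) : ℝ := Real.arccos ((e3 ⬝ᵥ q) / ‖q‖)

lemma norm_polarAxis {q : Vec3} (hq : crossV e3 q ≠ 0) : ‖polarAxis q‖ = 1 :=
  norm_smul_inv_norm hq

lemma polarAxis_dotProduct_e3 (q : Vec3) : (polarAxis q).ofLp ⬝ᵥ e3.ofLp = 0 := by
  change (‖crossV e3 q‖⁻¹ • (e3.ofLp ⨯₃ q.ofLp)) ⬝ᵥ e3.ofLp = 0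
  rw [smul_dotProduct, dotProduct_comm, dot_self_cross, smul_zero]

lemma polarAxis_cross_e3 (q : Vec3) :
    (polarAxis q).ofLp ⨯₃ e3.ofLp = ‖crossV e3 q‖⁻¹ • (q.ofLp - (e3 ⬝ᵥ q) • e3.ofLp) := by
  change (‖crossV e3 q‖⁻¹ • (e3.ofLp ⨯₃ q.ofLp)) ⨯₃ e3.ofLp = _
  rw [map_smul, LinearMap.smul_apply, cross_cross_eq_smul_sub_smul, e3_dotProduct_self,
    one_smul, dotProduct_comm q.ofLp e3.ofLp]

lemma cos_polarAngle {q : Vec3} (hq : q ≠ 0) : Real.cos (polarAngle q) = (e3 ⬝ᵥ q) / ‖q‖ :=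
  cos_arccos_div_of_sq_add_sq (norm_pos_iff.mpr hq) (r := ‖crossV e3 q‖)
    (by rw [norm_crossV_e3_sq]; ring)

lemma sin_polarAngle {q : Vec3} (hq : q ≠ 0) :
    Real.sin (polarAngle q) = ‖crossV e3 q‖ / ‖q‖ :=
  sin_arccos_div_of_sq_add_sq (norm_pos_iff.mpr hq) (norm_nonneg _)
    (by rw [norm_crossV_e3_sq]; ring)

theorem mulv_exp_polarAngle_smul_skew_polarAxis {q : Vec3} (hq : crossV e3 q ≠ 0) :
    mulv (NormedSpace.exp (polarAngle q • skew (polarAxis q))) e3 = ‖q‖⁻¹ • q := by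
  have hq0 := crossV_ne_zero_right hq
  have hr : ‖crossV e3 q‖ ≠ 0 := norm_ne_zero_iff.mpr hq
  have hscale : ‖crossV e3 q‖ / ‖q‖ * ‖crossV e3 q‖⁻¹ = ‖q‖⁻¹ := by field_simp
  apply WithLp.ofLp_injective
  rw [mulv, exp_smul_skew_mulVec_of_orthogonal (norm_polarAxis hq) (polarAxis_dotProduct_e3 q),
    cos_polarAngle hq0, sin_polarAngle hq0, polarAxis_cross_e3, smul_smul, hscale,
    WithLp.ofLp_toLp, WithLp.ofLp_smul]
  module

theorem polar_parametrisation_inverse_general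
    (q : Vec3) (hcross : crossV e3 q ≠ 0)
    (θ : ℝ) (hθ : θ = Real.arccos ((e3 ⬝ᵥ q) / ‖q‖))
    (Ω : Vec3) (hΩ : Ω = -θ • (‖crossV e3 q‖⁻¹ • crossV e3 q))
    (s : ℝ) (hs : s = -Real.log ‖q‖) :
    mulv (NormedSpace.exp (-skew Ω)) e3 = ‖q‖⁻¹ • q ∧
    Real.exp (-s) • mulv (NormedSpace.exp (skew Ω))ᵀ e3 = q ∧
    SOT3.act (SOT3.inv (NormedSpace.exp (skew Ω), Real.exp s)) e3 = q := by
  have hq : 0 < ‖q‖ := norm_pos_iff.mpr (crossV_ne_zero_right hcross)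
  have hdir : mulv (NormedSpace.exp (-skew Ω)) e3 = ‖q‖⁻¹ • q := by
    have hskew : -skew Ω = polarAngle q • skew (polarAxis q) := by
      rw [hΩ, skew_smul, neg_smul, neg_neg, hθ, polarAngle, polarAxis]
    rw [hskew, mulv_exp_polarAngle_smul_skew_polarAxis hcross]
  have htranspose : (NormedSpace.exp (skew Ω))ᵀ = NormedSpace.exp (-skew Ω) := by
    rw [← Matrix.exp_transpose, skew_transpose]
  have hscale : Real.exp (-s) = ‖q‖ := by
    rw [hs, neg_neg, Real.exp_log hq]
  have hinv : Real.exp (-s) • mulv (NormedSpace.exp (skew Ω))ᵀ e3 = q := by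
    rw [htranspose, hdir, hscale, smul_inv_smul₀ hq.ne']
  refine ⟨hdir, hinv, ?_⟩
  rwa [SOT3.act, SOT3.inv, ← Real.exp_neg]

/-- The polar parametrisation of visual landmarks is inverted by the
`SOT(3)` exponential: for `q ≠ 0` with `e₃ × q ≠ 0`, setting
`θ := arccos(e₃ᵀ q / |q|)`, `Ω := −θ (e₃ × q)/|e₃ × q|` and `s := −log |q|`, one has
`exp(−Ω^×) e₃ = q/|q|` and `e^{−s} exp(Ω^×)ᵀ e₃ = q`; i.e. the `SOT(3)` element
`exp_{SOT(3)}((Ω, s)^∧) = (exp(Ω^×), e^s)` satisfies `exp_{SOT(3)}((Ω, s)^∧)⁻¹ e₃ = q`. -/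
theorem polar_parametrisation_inverse
    (q : Vec3) (hq : q ≠ 0) (hcross : crossV e3 q ≠ 0)
    (θ : ℝ) (hθ : θ = Real.arccos ((e3 ⬝ᵥ q) / ‖q‖))
    (Ω : Vec3) (hΩ : Ω = -θ • (‖crossV e3 q‖⁻¹ • crossV e3 q))
    (s : ℝ) (hs : s = -Real.log ‖q‖) :
    mulv (NormedSpace.exp (-skew Ω)) e3 = ‖q‖⁻¹ • q ∧
    Real.exp (-s) • mulv (NormedSpace.exp (skew Ω))ᵀ e3 = q ∧
    SOT3.act (SOT3.inv (NormedSpace.exp (skew Ω), Real.exp s)) e3 = q :=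
  polar_parametrisation_inverse_general q hcross θ hθ Ω hΩ s hs
end
end
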